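/- arXiv:1010.3661 — 2 statements merged into one kernel-verified Lean document; each statement's English description precedes it below -/
import Mathlib

section
/- The system of equations −9a²b − 4a² − 3ab²c + 24ab² + 3b³ − 16b² + 9b = 0, 9a²b + 8a² − 24ab + 3ac − 9b³ + 16b² − 3b = 0, −3a²bc − 4a²c − 3ab²c² − 12ab² + 24abc − 6ac² + 3b³c − 3bc = 0 with c = 1 and a,b > 0 implies a = b, and then a satisfies 15a² − 20a + 9 = 0; hence the system has no positive real solutions with c = 1. -/
/-- For the normalized Einstein system on `G₂/T` (with `a = x₂`, `b = x₃`,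
`c = x₆`, `x₁ = x₅ = 1`, `x₄ = x₃`) in the case `c = 1`: any positive solution
of the three polynomial equations satisfies `a = b` and `15a² − 20a + 9 = 0`;
hence there are no positive real solutions with `c = 1`. -/
theorem g2T_no_einstein_c_eq_one (a b c : ℝ) (ha : 0 < a) (hb : 0 < b)
    (hc : c = 1)
    (h1 : -9*a^2*b - 4*a^2 - 3*a*b^2*c + 24*a*b^2 + 3*b^3 - 16*b^2 + 9*b = 0)
    (h2 : 9*a^2*b + 8*a^2 - 24*a*b + 3*a*c - 9*b^3 + 16*b^2 - 3*b = 0)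
    (h3 : -3*a^2*b*c - 4*a^2*c - 3*a*b^2*c^2 - 12*a*b^2 + 24*a*b*c - 6*a*c^2
            + 3*b^3*c - 3*b*c = 0) :
    a = b ∧ 15*a^2 - 20*a + 9 = 0 := by
  subst hc
  have hab : a = b := by
    linear_combination
      (-(174511:ℝ)/136416 + (156143/34104)*b - (148845/45472)*b^2
        - (215801/68208)*a - (21939/22736)*a*b - (591/5684)*a^2) * h1
      + (-(151775:ℝ)/68208 + (151271/34104)*b - (6919/2842)*b^2
        - (107701/34104)*a - (28243/22736)*a*b - (591/2842)*a^2) * h2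
      + (-(174511:ℝ)/136416 + (72553/17052)*b - (26181/6496)*b^2
        - (193727/68208)*a - (1773/5684)*a^2) * h3
  have key : b * (15*b^2 - 20*b + 9) = 0 := by
    linear_combination h1 + h2 - (4*a + 21*b^2 - 20*b + 3) * hab
  exfalso
  nlinarith [sq_nonneg (3*b - 2), hb.le, mul_pos hb hb]
end

section
/- The degree-14 polynomial 28431t¹⁴ − 589032t¹³ + 5435343t¹² − 29379024t¹¹ + 100757208t¹⁰ − 224163176t⁹ + 336260186t⁸ − 371473808t⁷ + 339968604t⁶ − 262478048t⁵ + 152856152t⁴ − 69550016t³ + 35706576t² − 17407872t + 3888000 has exactly two real roots, one in the interval (0.74, 0.75) and one in the interval (1.78, 1.80). -/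
/-!
The real line is cut at `0, 0.74, 0.75, 1.78, 1.80, 4.75, 5`. On each piece, `P14` (or, on the
two pieces that contain a root, its derivative) is written with positive coefficients in the
Bernstein basis `(t - a)^k (b - t)^(n - k)` of the piece, or in powers of `-t` resp. `t - 5` on
the two unbounded pieces. This shows that `P14` is positive on `(-∞, 0.74] ∪ [1.80, ∞)`,
negative on `[0.75, 1.78]`, and strictly monotone on `[0.74, 0.75]` and `[1.78, 1.80]`, so the
intermediate value theorem gives exactly one root in each of the latter two intervals.
-/

/-- The degree-14 polynomial arising from the Gröbner basis computation for the
Einstein equations on `G₂/T` (normalized with `x₁ = x₅ = 1`, `x₄ = x₃`). -/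
def P14 (t : ℝ) : ℝ :=
  28431*t^14 - 589032*t^13 + 5435343*t^12 - 29379024*t^11 + 100757208*t^10
  - 224163176*t^9 + 336260186*t^8 - 371473808*t^7 + 339968604*t^6
  - 262478048*t^5 + 152856152*t^4 - 69550016*t^3 + 35706576*t^2
  - 17407872*t + 3888000

open Set

section Certificates

variable {n : ℕ}

/-- The binomial coefficients and powers of `b - a` of the Bernstein basis are absorbed into
`c`, so that certificates can be given with integer coefficients. -/
def bernsteinSum (c : Fin (n + 1) → ℝ) (a b t : ℝ) : ℝ :=
  ∑ k : Fin (n + 1), c k * (t - a) ^ (k : ℕ) * (b - t) ^ (n - k)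

theorem bernsteinSum_pos {c : Fin (n + 1) → ℝ} {a b t : ℝ} (hc : ∀ k, 0 < c k) (hab : a < b)
    (ht : t ∈ Icc a b) : 0 < bernsteinSum c a b t := by
  refine Finset.sum_pos' (fun k _ => mul_nonneg (mul_nonneg (hc k).le
    (pow_nonneg (sub_nonneg.2 ht.1) _)) (pow_nonneg (sub_nonneg.2 ht.2) _)) ?_
  rcases ht.2.lt_or_eq with htb | rfl
  · exact ⟨0, Finset.mem_univ _, by simpa using mul_pos (hc 0) (pow_pos (sub_pos.2 htb) n)⟩
  · exact ⟨Fin.last n, Finset.mem_univ _,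
      by simpa using mul_pos (hc _) (pow_pos (sub_pos.2 hab) n)⟩

theorem pos_of_mul_eq_bernsteinSum {f : ℝ → ℝ} {C a b : ℝ} (c : Fin (n + 1) → ℝ) (hC : 0 < C)
    (hc : ∀ k, 0 < c k) (hab : a < b) (hf : ∀ t, C * f t = bernsteinSum c a b t) {t : ℝ}
    (ht : t ∈ Icc a b) : 0 < f t :=
  pos_of_mul_pos_right ((hf t).symm ▸ bernsteinSum_pos hc hab ht) hC.le

theorem sum_mul_pow_pos {c : Fin (n + 1) → ℝ} {s : ℝ} (hc : ∀ k, 0 < c k) (hs : 0 ≤ s) :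
    0 < ∑ k : Fin (n + 1), c k * s ^ (k : ℕ) :=
  Finset.sum_pos' (fun k _ => mul_nonneg (hc k).le (pow_nonneg hs _))
    ⟨0, Finset.mem_univ _, by simpa using hc 0⟩

end Certificates

theorem exists_mem_Ioo_zero_of_injOn {f : ℝ → ℝ} {a b : ℝ} (hab : a ≤ b)
    (hf : ContinuousOn f (Icc a b)) (hinj : InjOn f (Icc a b)) (hsign : f a * f b < 0) :
    ∃ r ∈ Ioo a b, f r = 0 ∧ ∀ t ∈ Icc a b, f t = 0 → t = r := by
  have hzero : (0 : ℝ) ∈ uIcc (f a) (f b) := by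
    rcases mul_neg_iff.1 hsign with ⟨ha, hb⟩ | ⟨ha, hb⟩
    · exact mem_uIcc.2 (Or.inr ⟨hb.le, ha.le⟩)
    · exact mem_uIcc.2 (Or.inl ⟨ha.le, hb.le⟩)
  obtain ⟨r, hr, hfr⟩ := intermediate_value_uIcc (by rwa [uIcc_of_le hab]) hzero
  rw [uIcc_of_le hab] at hr
  have hra : r ≠ a := by rintro rfl; simp [hfr] at hsign
  have hrb : r ≠ b := by rintro rfl; simp [hfr] at hsign
  exact ⟨r, ⟨lt_of_le_of_ne hr.1 hra.symm, lt_of_le_of_ne hr.2 hrb⟩, hfr,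
    fun t ht hft => hinj ht hr (hft.trans hfr.symm)⟩

def P14' (t : ℝ) : ℝ :=
  398034*t^13 - 7657416*t^12 + 65224116*t^11 - 323169264*t^10 + 1007572080*t^9
  - 2017468584*t^8 + 2690081488*t^7 - 2600316656*t^6 + 2039811624*t^5
  - 1312390240*t^4 + 611424608*t^3 - 208650048*t^2 + 71413152*t - 17407872

open Polynomial in
theorem hasDerivAt_P14 (t : ℝ) : HasDerivAt P14 (P14' t) t := by
  have hP : P14 = fun t => eval t (28431*X^14 - 589032*X^13 + 5435343*X^12 - 29379024*X^11
      + 100757208*X^10 - 224163176*X^9 + 336260186*X^8 - 371473808*X^7 + 339968604*X^6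
      - 262478048*X^5 + 152856152*X^4 - 69550016*X^3 + 35706576*X^2 - 17407872*X
      + 3888000 : ℝ[X]) := by
    funext t
    simp [P14]
  rw [hP]
  refine (Polynomial.hasDerivAt _ t).congr_deriv ?_
  simp only [P14', derivative_sub, derivative_mul, derivative_ofNat, zero_mul,
    derivative_X_pow_succ, Nat.cast_ofNat, map_add, map_one, zero_add, Nat.cast_one, pow_one,
    derivative_X, mul_one, add_zero, eval_sub, eval_add, eval_mul, eval_ofNat, eval_C, eval_one,
    eval_pow, eval_X]
  ring

theorem continuous_P14 : Continuous P14 :=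
  continuous_iff_continuousAt.2 fun t => (hasDerivAt_P14 t).continuousAt

/- The vectors below are the Bernstein coefficients of `P14` or `± P14'` on the given interval
(resp. its Taylor coefficients at `0` and `5`), computed in exact rational arithmetic and
scaled by the constant `C` to clear denominators. -/

theorem P14_pos_of_nonpos {t : ℝ} (ht : t ≤ 0) : 0 < P14 t := by
  let c : Fin 15 → ℝ :=
    ![3888000, 17407872, 35706576, 69550016, 152856152, 262478048, 339968604, 371473808,
      336260186, 224163176, 100757208, 29379024, 5435343, 589032, 28431]
  have key : P14 t = ∑ k, c k * (-t) ^ (k : ℕ) := by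
    simp only [c, Fin.sum_univ_succ, Matrix.cons_val_zero, Matrix.cons_val_succ, P14]
    norm_num
    ring
  exact key ▸ sum_mul_pow_pos (by intro k; fin_cases k <;> norm_num [c]) (neg_nonneg.2 ht)

theorem P14_pos_of_five_le {t : ℝ} (ht : 5 ≤ t) : 0 < P14 t := by
  let c : Fin 15 → ℝ :=
    ![9297018540, 215405376438, 1841488503511, 3989160946024, 4449311933952, 3137221916622,
      1533982583149, 545381795232, 144240400016, 28537240474, 4182477213, 441739656, 31828788,
      1401138, 28431]
  have key : P14 t = ∑ k, c k * (t - 5) ^ (k : ℕ) := by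
    simp only [c, Fin.sum_univ_succ, Matrix.cons_val_zero, Matrix.cons_val_succ, P14]
    norm_num
    ring
  exact key ▸ sum_mul_pow_pos (by intro k; fin_cases k <;> norm_num [c]) (sub_nonneg.2 ht)

theorem P14_pos_of_mem_Icc_0_074 {t : ℝ} (ht : t ∈ Icc 0 0.74) : 0 < P14 t :=
  pos_of_mul_eq_bernsteinSum (C := 9012061295995008299689)
    ![2373046875000000000000000000000, 25360214062500000000000000000000,
      125669673082031250000000000000000, 376526699638437500000000000000000,
      753172845918171093750000000000000, 1052825497595078250000000000000000,
      1049477316833851243593750000000000, 750031323979161985887500000000000,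
      382778219252202610107906250000000, 138471973509192832796015000000000,
      35569753818076371077766200000000, 6693878413040032423967686000000,
      951277414496407896572948957500, 82711367811012196996109629800, 421593307343312564365130259]
    (by norm_num) (by intro k; fin_cases k <;> norm_num) (by norm_num)
    (fun t => by
      simp only [bernsteinSum, Fin.sum_univ_succ, Matrix.cons_val_zero, Matrix.cons_val_succ, P14]
      norm_num
      ring) ht

theorem P14'_neg_of_mem_Icc_074_075 {t : ℝ} (ht : t ∈ Icc 0.74 0.75) : P14' t < 0 :=
  neg_pos.1 <| pos_of_mul_eq_bernsteinSum (f := fun t => -P14' t) (C := 1)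
    ![17005941402033029362438433193984, 221589494793876531118996703027200,
      1332801740354673338824617907200000, 4899608476524161707627921344000000,
      12282429796136481166211242000000000, 22171620542580643240411455000000000,
      29650618976455092852564750000000000, 29743186748523829237465625000000000,
      22379883389468791008486328125000000, 12475238654419342736206054687500000,
      5007558664639093728637695312500000, 1370643757326439476013183593750000,
      229295343083453893661499023437500, 17706177371326088905334472656250]
    (by norm_num) (by intro k; fin_cases k <;> norm_num) (by norm_num)
    (fun t => by
      simp only [bernsteinSum, Fin.sum_univ_succ, Matrix.cons_val_zero, Matrix.cons_val_succ, P14']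
      norm_num
      ring) ht

theorem P14_neg_of_mem_Icc_075_178 {t : ℝ} (ht : t ∈ Icc 0.75 1.78) : P14 t < 0 :=
  neg_pos.1 <| pos_of_mul_eq_bernsteinSum (f := fun t => -P14 t)
    (C := 15125897248551112432256145169)
    ![10417615812756121158599853515625, 1969582890625172853469848632812500,
      29350859413575362920761108398437500, 268475842149224365615844726562500000,
      1477520718642213958436584472656250000, 5086065134951049686487060546875000000,
      11757692275632008328342568359375000000, 19635561044760029543673668750000000000,
      25256445332909846372760885187500000000, 25714203677946448656531951710000000000,
      19987059306782023571802460149200000000, 10820256554856219119957102185088000000,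
      3540413481176140534543387747110400000, 526963500494061017897283369941811200,
      4572901491363121411014038543220736]
    (by norm_num) (by intro k; fin_cases k <;> norm_num) (by norm_num)
    (fun t => by
      simp only [bernsteinSum, Fin.sum_univ_succ, Matrix.cons_val_zero, Matrix.cons_val_succ, P14]
      norm_num
      ring) ht

theorem P14'_pos_of_mem_Icc_178_180 {t : ℝ} (ht : t ∈ Icc 1.78 1.80) : 0 < P14' t :=
  pos_of_mul_eq_bernsteinSum (C := 1)
    ![548656135769419037923675039746, 7265725654360678152565284662580,
      44403950498296695186409884340800, 165821616337395117903221981816000,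
      422169401015217642570002890900000, 773789954079550882856946280200000,
      1050472281411455413876610656000000, 1069466064642193856692045760000000,
      816527837078937206840662200000000, 461744979263112411630590000000000,
      187986850280337481730560000000000, 52177536005524153864800000000000,
      8849580280236219918000000000000, 692680718112978060000000000000]
    (by norm_num) (by intro k; fin_cases k <;> norm_num) (by norm_num)
    (fun t => by
      simp only [bernsteinSum, Fin.sum_univ_succ, Matrix.cons_val_zero, Matrix.cons_val_succ, P14']
      norm_num
      ring) ht

theorem P14_pos_of_mem_Icc_180_475 {t : ℝ} (ht : t ∈ Icc 1.80 4.75) : 0 < P14 t :=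
  pos_of_mul_eq_bernsteinSum (C := 6193386212891813387462761)
    ![911933006431071246483456, 287028657122905466905559040, 8182358641539023277077299200,
      109637465747614110853365760000, 884589606581749661575413760000,
      4733494900240420503573299200000, 17569378206653739955344384000000,
      46110710656253007096217600000000, 85770582166293012477619200000000,
      111648547000474775310460000000000, 98499117355429702482092500000000,
      54982247564266723059925000000000, 16397341519470270141453125000000,
      1405649971655195015341796875000, 37466625710564975823974609375]
    (by norm_num) (by intro k; fin_cases k <;> norm_num) (by norm_num)
    (fun t => by
      simp only [bernsteinSum, Fin.sum_univ_succ, Matrix.cons_val_zero, Matrix.cons_val_succ, P14]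
      norm_num
      ring) ht

theorem P14_pos_of_mem_Icc_475_5 {t : ℝ} (ht : t ∈ Icc 4.75 5) : 0 < P14 t :=
  pos_of_mul_eq_bernsteinSum (C := 1)
    ![6138531956418965639, 73705358918160295864, 401367515693945203520, 1306383218266363396608,
      2816808062436972074240, 4208243625850657282048, 4418978313554003558400,
      3237684784329283076096, 1625019318347186372608, 583025534711527636992,
      223530044811221401600, 134887647837295738880, 70076215347222937600, 20483481644908412928,
      2495649411225354240]
    (by norm_num) (by intro k; fin_cases k <;> norm_num) (by norm_num)
    (fun t => by
      simp only [bernsteinSum, Fin.sum_univ_succ, Matrix.cons_val_zero, Matrix.cons_val_succ, P14]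
      norm_num
      ring) ht

theorem P14_pos_of_le_074 {t : ℝ} (ht : t ≤ 0.74) : 0 < P14 t := by
  rcases le_total t 0 with h | h
  · exact P14_pos_of_nonpos h
  · exact P14_pos_of_mem_Icc_0_074 ⟨h, ht⟩

theorem P14_pos_of_180_le {t : ℝ} (ht : 1.80 ≤ t) : 0 < P14 t := by
  rcases le_total t 4.75 with h | h
  · exact P14_pos_of_mem_Icc_180_475 ⟨ht, h⟩
  rcases le_total t 5 with h' | h'
  · exact P14_pos_of_mem_Icc_475_5 ⟨h, h'⟩
  · exact P14_pos_of_five_le h'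

theorem strictAntiOn_P14_Icc_074_075 : StrictAntiOn P14 (Icc 0.74 0.75) :=
  strictAntiOn_of_deriv_neg (convex_Icc _ _) continuous_P14.continuousOn fun t ht => by
    rw [interior_Icc] at ht
    exact (hasDerivAt_P14 t).deriv ▸ P14'_neg_of_mem_Icc_074_075 (Ioo_subset_Icc_self ht)

theorem strictMonoOn_P14_Icc_178_180 : StrictMonoOn P14 (Icc 1.78 1.80) :=
  strictMonoOn_of_deriv_pos (convex_Icc _ _) continuous_P14.continuousOn fun t ht => by
    rw [interior_Icc] at ht
    exact (hasDerivAt_P14 t).deriv ▸ P14'_pos_of_mem_Icc_178_180 (Ioo_subset_Icc_self ht)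

/-- `P14` has exactly two real roots: one in `(0.74, 0.75)` and one in
`(1.78, 1.80)`. -/
theorem P14_two_real_roots :
    ∃ r₁ r₂ : ℝ, r₁ ∈ Set.Ioo (0.74 : ℝ) 0.75 ∧ r₂ ∈ Set.Ioo (1.78 : ℝ) 1.80 ∧
      P14 r₁ = 0 ∧ P14 r₂ = 0 ∧ ∀ t : ℝ, P14 t = 0 → t = r₁ ∨ t = r₂ := by
  obtain ⟨r₁, hr₁, hPr₁, huniq₁⟩ := exists_mem_Ioo_zero_of_injOn (by norm_num)
    continuous_P14.continuousOn strictAntiOn_P14_Icc_074_075.injOn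
    (mul_neg_of_pos_of_neg (P14_pos_of_le_074 le_rfl)
      (P14_neg_of_mem_Icc_075_178 ⟨le_rfl, by norm_num⟩))
  obtain ⟨r₂, hr₂, hPr₂, huniq₂⟩ := exists_mem_Ioo_zero_of_injOn (by norm_num)
    continuous_P14.continuousOn strictMonoOn_P14_Icc_178_180.injOn
    (mul_neg_of_neg_of_pos (P14_neg_of_mem_Icc_075_178 ⟨by norm_num, le_rfl⟩)
      (P14_pos_of_180_le le_rfl))
  refine ⟨r₁, r₂, hr₁, hr₂, hPr₁, hPr₂, fun t ht => ?_⟩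
  rcases le_or_gt t 0.74 with h | h₁
  · exact absurd ht (P14_pos_of_le_074 h).ne'
  rcases le_or_gt t 0.75 with h | h₂
  · exact Or.inl (huniq₁ t ⟨h₁.le, h⟩ ht)
  rcases le_or_gt t 1.78 with h | h₃
  · exact absurd ht (P14_neg_of_mem_Icc_075_178 ⟨h₂.le, h⟩).ne
  rcases le_or_gt t 1.80 with h | h₄
  · exact Or.inr (huniq₂ t ⟨h₃.le, h⟩ ht)
  · exact absurd ht (P14_pos_of_180_le h₄.le).ne'
end
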